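/- Let I be a tall P-ideal on ω. Then cov*(I) = ω₁ if and only if there is a cotower in I of height ω₁. -/

import Mathlib

/-!
Since `I` is a proper P-ideal, every countable family `D ⊆ I` is almost contained in some
`B ∈ I`, and then `D` misses the infinite set `Bᶜ`; hence `cov*(I) ≥ ℵ₁`. A family fails to meet
every infinite set infinitely exactly when it has a coinfinite pseudounion, so the members of a
cotower of height `ω₁` witness `cov*(I) ≤ ℵ₁`. Conversely, enumerate a witness as
`(e β)_{β < ω₁}` and use the P-ideal property to choose `A α ∈ I` almost containing every `A β`
and `e β` with `β < α`; a pseudounion of the `A α` would be one of the witness family.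
-/

open Set Cardinal

/-- `I` is a (proper) ideal on ω containing all finite sets. -/
def IsIdealOmega (I : Set (Set ℕ)) : Prop :=
  (∀ A ∈ I, ∀ B ⊆ A, B ∈ I) ∧ (∀ A ∈ I, ∀ B ∈ I, A ∪ B ∈ I) ∧
    (∀ A : Set ℕ, A.Finite → A ∈ I) ∧ Set.univ ∉ I

/-- `I` is tall: every infinite set contains an infinite member of `I`. -/
def IsTall (I : Set (Set ℕ)) : Prop :=
  ∀ X : Set ℕ, X.Infinite → ∃ A ∈ I, A ⊆ X ∧ A.Infinite

/-- `I` is a P-ideal. -/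
def IsPIdeal (I : Set (Set ℕ)) : Prop :=
  ∀ C : Set (Set ℕ), C.Countable → C ⊆ I → ∃ A ∈ I, ∀ c ∈ C, (c \ A).Finite

/-- cov*(I): least size of a family in `I` meeting every infinite set infinitely. -/
noncomputable def covStar (I : Set (Set ℕ)) : Cardinal :=
  sInf {c | ∃ D : Set (Set ℕ), D ⊆ I ∧ Cardinal.mk D = c ∧
    ∀ X : Set ℕ, X.Infinite → ∃ A ∈ D, (X ∩ A).Infinite}

open scoped Ordinal

universe u v

def MeetsEveryInfinite (D : Set (Set ℕ)) : Prop :=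
  ∀ X : Set ℕ, X.Infinite → ∃ A ∈ D, (X ∩ A).Infinite

theorem not_meetsEveryInfinite_iff {D : Set (Set ℕ)} :
    ¬ MeetsEveryInfinite D ↔ ∃ Y : Set ℕ, Yᶜ.Infinite ∧ ∀ A ∈ D, (A \ Y).Finite := by
  simp only [MeetsEveryInfinite, not_forall, not_exists, not_and, Set.not_infinite, exists_prop]
  constructor
  · rintro ⟨X, hX, hXD⟩
    exact ⟨Xᶜ, by rwa [compl_compl], fun A hA => by simpa [sdiff_compl, inter_comm] using hXD A hA⟩
  · rintro ⟨Y, hY, hYD⟩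
    exact ⟨Yᶜ, hY, fun A hA => by simpa [sdiff_eq, inter_comm] using hYD A hA⟩

theorem MeetsEveryInfinite.nonempty {D : Set (Set ℕ)} (hD : MeetsEveryInfinite D) : D.Nonempty :=
  let ⟨A, hA, _⟩ := hD univ infinite_univ
  ⟨A, hA⟩

theorem IsIdealOmega.compl_infinite {I : Set (Set ℕ)} (hI : IsIdealOmega I) {A : Set ℕ}
    (hA : A ∈ I) : Aᶜ.Infinite := by
  obtain ⟨-, hunion, hfin, huniv⟩ := hI
  intro hfin'
  exact huniv (by simpa using hunion A hA Aᶜ (hfin _ hfin'))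

theorem aleph_one_le_mk_of_meetsEveryInfinite {I D : Set (Set ℕ)} (hI : IsIdealOmega I)
    (hP : IsPIdeal I) (hDI : D ⊆ I) (hD : MeetsEveryInfinite D) : ℵ₁ ≤ #D := by
  by_contra hlt
  rw [not_le, lt_aleph_one_iff, le_aleph0_iff_set_countable] at hlt
  obtain ⟨B, hB, hDB⟩ := hP D hlt hDI
  exact not_meetsEveryInfinite_iff.2 ⟨B, hI.compl_infinite hB, hDB⟩ hD

theorem covStar_eq_aleph_one_iff {I : Set (Set ℕ)} (hI : IsIdealOmega I) (hP : IsPIdeal I) :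
    covStar I = ℵ₁ ↔ ∃ D ⊆ I, #D ≤ ℵ₁ ∧ MeetsEveryInfinite D := by
  change sInf {c | ∃ D ⊆ I, #D = c ∧ MeetsEveryInfinite D} = ℵ₁ ↔ _
  constructor
  · intro hcov
    have hne : {c | ∃ D ⊆ I, #D = c ∧ MeetsEveryInfinite D}.Nonempty := by
      by_contra h
      rw [not_nonempty_iff_eq_empty] at h
      exact (aleph_pos 1).ne (by rwa [h, Cardinal.sInf_empty] at hcov)
    obtain ⟨D, hDI, hD, hcov'⟩ := hcov ▸ csInf_mem hne
    exact ⟨D, hDI, hD.le, hcov'⟩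
  · rintro ⟨D, hDI, hcard, hD⟩
    have hmem : #D ∈ {c | ∃ D ⊆ I, #D = c ∧ MeetsEveryInfinite D} := ⟨D, hDI, rfl, hD⟩
    refine le_antisymm ((csInf_le' hmem).trans hcard) (le_csInf ⟨_, hmem⟩ ?_)
    rintro _ ⟨D', hD'I, rfl, hD'⟩
    exact aleph_one_le_mk_of_meetsEveryInfinite hI hP hD'I hD'

theorem countable_Iio_of_lt_omega_one {α : Ordinal.{u}} (hα : α < ω₁) : (Iio α).Countable := by
  rw [← le_aleph0_iff_set_countable, Cardinal.mk_Iio_ordinal, ← lift_aleph0.{u+1, u}, lift_le,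
    ← lt_aleph_one_iff, ← lt_omega_iff_card_lt]
  exact hα

theorem mk_image_Iio_omega_one_le {α : Type v} (f : Ordinal.{u} → α) :
    #(f '' Iio ω₁) ≤ ℵ₁ := by
  have h := mk_image_le_lift (f := f) (s := Iio ω₁)
  simpa [Cardinal.mk_Iio_ordinal] using h

theorem exists_enum_of_mk_le_aleph_one {α : Type v} {D : Set α} (hD : D.Nonempty)
    (hcard : #D ≤ ℵ₁) : ∃ e : Ordinal.{u} → α, (∀ β, e β ∈ D) ∧ D ⊆ e '' Iio ω₁ := by
  obtain ⟨f⟩ : Nonempty (D ↪ Iio (ω₁ : Ordinal.{u})) := by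
    simpa [← lift_mk_le', Cardinal.mk_Iio_ordinal] using hcard
  have : Nonempty D := hD.to_subtype
  set g : D → Ordinal.{u} := fun d => f d
  have hg : g.Injective := Subtype.val_injective.comp f.injective
  refine ⟨fun β => (Function.invFun g β : D), fun β => (Function.invFun g β).2,
    fun d hd => ⟨g ⟨d, hd⟩, (f ⟨d, hd⟩).2, ?_⟩⟩
  exact congrArg Subtype.val (Function.leftInverse_invFun hg ⟨d, hd⟩)

/-- A member of `I` almost containing every member of `C ∩ I`; an arbitrary set if there is none. -/
noncomputable def absorbing (I C : Set (Set ℕ)) : Set ℕ :=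
  Classical.epsilon fun B => B ∈ I ∧ ∀ c ∈ C ∩ I, (c \ B).Finite

theorem IsPIdeal.absorbing_spec {I C : Set (Set ℕ)} (hP : IsPIdeal I) (hC : C.Countable) :
    absorbing I C ∈ I ∧ ∀ c ∈ C ∩ I, (c \ absorbing I C).Finite :=
  Classical.epsilon_spec (hP (C ∩ I) (hC.mono inter_subset_left) inter_subset_right)

noncomputable def absorbingTower (I : Set (Set ℕ)) (e : Ordinal.{u} → Set ℕ) :
    Ordinal.{u} → Set ℕ :=
  Ordinal.lt_wf.fix fun α A => absorbing I (range (fun β : Iio α => A β β.2) ∪ e '' Iio α)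

theorem absorbingTower_eq (I : Set (Set ℕ)) (e : Ordinal.{u} → Set ℕ) (α : Ordinal.{u}) :
    absorbingTower I e α = absorbing I (absorbingTower I e '' Iio α ∪ e '' Iio α) := by
  rw [absorbingTower, WellFounded.fix_eq]
  simp only [image_eq_range]

theorem IsPIdeal.absorbingTower_spec {I : Set (Set ℕ)} (hP : IsPIdeal I) (e : Ordinal.{u} → Set ℕ)
    {α : Ordinal.{u}} (hα : α < ω₁) :
    absorbingTower I e α ∈ I ∧ ∀ c ∈ (absorbingTower I e '' Iio α ∪ e '' Iio α) ∩ I,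
      (c \ absorbingTower I e α).Finite := by
  have hc := countable_Iio_of_lt_omega_one hα
  rw [absorbingTower_eq]
  exact hP.absorbing_spec ((hc.image _).union (hc.image _))

theorem exists_cotower_of_meetsEveryInfinite {I D : Set (Set ℕ)} (hP : IsPIdeal I)
    (hDI : D ⊆ I) (hcard : #D ≤ ℵ₁) (hD : MeetsEveryInfinite D) :
    ∃ A : Ordinal.{u} → Set ℕ, (∀ α < ω₁, A α ∈ I) ∧
      (∀ β α, β ≤ α → α < ω₁ → (A β \ A α).Finite) ∧
      ¬ ∃ Y : Set ℕ, Yᶜ.Infinite ∧ ∀ α < ω₁, (A α \ Y).Finite := by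
  obtain ⟨e, heD, hDe⟩ := exists_enum_of_mk_le_aleph_one.{u} hD.nonempty hcard
  set A := absorbingTower I e
  have hAI : ∀ α < ω₁, A α ∈ I := fun α hα => (hP.absorbingTower_spec e hα).1
  refine ⟨A, hAI, fun β α hβα hα => ?_, ?_⟩
  · rcases hβα.eq_or_lt with rfl | hβα
    · simp
    · exact (hP.absorbingTower_spec e hα).2 _ ⟨.inl ⟨β, hβα, rfl⟩, hAI β (hβα.trans hα)⟩
  · rintro ⟨Y, hY, hAY⟩
    obtain ⟨d, hd, hYe⟩ := hD Yᶜ hY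
    obtain ⟨β, hβ, rfl⟩ := hDe hd
    have hβ' : Order.succ β < ω₁ := (isSuccLimit_omega 1).succ_lt hβ
    have heA : (e β \ A (Order.succ β)).Finite := (hP.absorbingTower_spec e hβ').2 _
      ⟨.inr ⟨β, Order.lt_succ β, rfl⟩, hDI (heD β)⟩
    refine hYe ((heA.union (hAY _ hβ')).subset ?_)
    rw [inter_comm, ← sdiff_eq]
    exact sdiff_triangle _ _ _

theorem stmt3_general (I : Set (Set ℕ)) (hI : IsIdealOmega I)
    (hP : IsPIdeal I) :
    covStar I = Cardinal.aleph 1 ↔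
      ∃ A : Ordinal → Set ℕ,
        (∀ α < (Cardinal.aleph 1).ord, A α ∈ I) ∧
        (∀ β α, β ≤ α → α < (Cardinal.aleph 1).ord → (A β \ A α).Finite) ∧
        ¬ ∃ Y : Set ℕ, Yᶜ.Infinite ∧ ∀ α < (Cardinal.aleph 1).ord, (A α \ Y).Finite := by
  rw [ord_aleph, covStar_eq_aleph_one_iff hI hP]
  constructor
  · rintro ⟨D, hDI, hcard, hD⟩
    exact exists_cotower_of_meetsEveryInfinite hP hDI hcard hD
  · rintro ⟨A, hAI, -, hA⟩
    refine ⟨A '' Iio ω₁, image_subset_iff.2 hAI, mk_image_Iio_omega_one_le A, ?_⟩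
    by_contra h
    obtain ⟨Y, hY, hAY⟩ := not_meetsEveryInfinite_iff.1 h
    exact hA ⟨Y, hY, fun α hα => hAY _ ⟨α, hα, rfl⟩⟩

theorem stmt3 (I : Set (Set ℕ)) (hI : IsIdealOmega I) (htall : IsTall I)
    (hP : IsPIdeal I) :
    covStar I = Cardinal.aleph 1 ↔
      ∃ A : Ordinal → Set ℕ,
        (∀ α < (Cardinal.aleph 1).ord, A α ∈ I) ∧
        (∀ β α, β ≤ α → α < (Cardinal.aleph 1).ord → (A β \ A α).Finite) ∧
        ¬ ∃ Y : Set ℕ, Yᶜ.Infinite ∧ ∀ α < (Cardinal.aleph 1).ord, (A α \ Y).Finite :=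
  stmt3_general I hI hP
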